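/- Let f1(x; μ, τ) be the lognormal density with parameters μ ∈ ℝ, τ > 0, and f2(x; λ, κ) the Weibull density with parameters λ, κ > 0. Then for every μ ∈ ℝ and τ > 0, the infimum over (λ, κ) ∈ (0, ∞)² of D_KL(f1(·; μ, τ) ‖ f2(·; λ, κ)) equals 1 − (1/2) log(2π), it is attained at κ = √τ and λ = exp(μ + 1/(2√τ)), and in particular the infimum does not depend on (μ, τ). -/

import Mathlib

/-! Under `y = log x` the lognormal law becomes the Gaussian `N(μ, 1/τ)`, and the log-likelihood
ratio against a Weibull density becomes a quadratic polynomial in `y` plus a multiple of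
`exp (κ y)`. The divergence is therefore read off from the mean, variance and moment generating
function of that Gaussian:
`D = log (τ / 2π) / 2 - log κ + s - 1/2 + exp (κ² / 2τ - s)` with `s = κ (log λ - μ)`.
Minimising, `exp t ≥ 1 + t` in `s` and `log u ≤ u - 1` at `u = κ² / τ` give the bound
`1 - log (2π) / 2`, with equality exactly when `s = 1/2` and `κ² = τ`. -/

open MeasureTheory Real

/-- Kullback--Leibler divergence between two densities on `(0, ∞)` (i.e. `∫₀^∞`). -/
noncomputable def klDivPos (f g : ℝ → ℝ) : ℝ :=
  ∫ x in Set.Ioi (0:ℝ), f x * Real.log (f x / g x)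

/-- Lognormal density with log-scale `μ` and precision-type parameter `τ`. -/
noncomputable def lognormalPdf (μ τ : ℝ) (x : ℝ) : ℝ :=
  (1 / x) * Real.sqrt (τ / (2 * Real.pi)) * Real.exp (-(τ * (Real.log x - μ) ^ 2) / 2)

/-- Weibull density with scale `λ` and shape `κ` (real powers). -/
noncomputable def weibullPdf (lam κ : ℝ) (x : ℝ) : ℝ :=
  (κ / lam) * (x / lam) ^ (κ - 1) * Real.exp (-((x / lam) ^ κ))

open ProbabilityTheory
open scoped NNReal

lemma setIntegral_Ioi_zero_eq_integral_exp_mul (F : ℝ → ℝ) :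
    ∫ x in Set.Ioi 0, F x = ∫ y, exp y * F (exp y) := by
  have h := integral_image_eq_integral_abs_deriv_smul MeasurableSet.univ
    (fun x _ => (hasDerivAt_exp x).hasDerivWithinAt) exp_injective.injOn F
  rw [Set.image_univ, range_exp, setIntegral_univ] at h
  simpa [abs_of_pos (exp_pos _)] using h

lemma integral_sq_sub_gaussianReal (μ : ℝ) (v : ℝ≥0) :
    ∫ x, (x - μ) ^ 2 ∂gaussianReal μ v = v := by
  simpa [variance_eq_integral measurable_id.aemeasurable] using
    variance_id_gaussianReal (μ := μ) (v := v)

lemma integral_sub_sub_add_exp_gaussianReal (μ : ℝ) (v : ℝ≥0) (a b c d t : ℝ) :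
    ∫ x, (a - b * x - c * (x - μ) ^ 2 + d * exp (t * x)) ∂gaussianReal μ v =
      a - b * μ - c * v + d * exp (μ * t + v * t ^ 2 / 2) := by
  have hid : Integrable (fun x : ℝ => x) (gaussianReal μ v) :=
    (memLp_id_gaussianReal 1).integrable le_rfl
  have hsq : Integrable (fun x : ℝ => (x - μ) ^ 2) (gaussianReal μ v) :=
    ((memLp_id_gaussianReal 2).sub (memLp_const μ)).integrable_sq
  have hexp : ∫ x, exp (t * x) ∂gaussianReal μ v = exp (μ * t + v * t ^ 2 / 2) :=
    congrFun mgf_id_gaussianReal t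
  have h1 : Integrable (fun x : ℝ => a - b * x) (gaussianReal μ v) :=
    (integrable_const a).sub (hid.const_mul b)
  have h2 : Integrable (fun x : ℝ => a - b * x - c * (x - μ) ^ 2) (gaussianReal μ v) :=
    h1.sub (hsq.const_mul c)
  rw [integral_add h2 ((integrable_exp_mul_gaussianReal t).const_mul d),
    integral_sub h1 (hsq.const_mul c), integral_sub (integrable_const a) (hid.const_mul b),
    integral_const_mul, integral_const_mul, integral_const_mul, integral_const,
    integral_id_gaussianReal, integral_sq_sub_gaussianReal, hexp]
  simp

lemma exp_mul_lognormalPdf_exp {τ : ℝ} (hτ : 0 < τ) (μ y : ℝ) :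
    exp y * lognormalPdf μ τ (exp y) = gaussianPDFReal μ (τ⁻¹).toNNReal y := by
  rw [gaussianPDFReal, lognormalPdf, Real.coe_toNNReal _ (inv_nonneg.2 hτ.le), log_exp,
    ← sqrt_inv, mul_inv, mul_inv, inv_inv]
  field_simp

lemma log_lognormalPdf_exp {τ : ℝ} (hτ : 0 < τ) (μ y : ℝ) :
    log (lognormalPdf μ τ (exp y)) = (1 / 2) * log (τ / (2 * π)) - y - τ / 2 * (y - μ) ^ 2 := by
  rw [lognormalPdf, log_mul (by positivity) (exp_ne_zero _),
    log_mul (by positivity) (sqrt_pos.2 (by positivity)).ne', log_sqrt (by positivity),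
    one_div, log_inv, log_exp, log_exp]
  ring

lemma weibullPdf_exp {lam : ℝ} (hlam : 0 < lam) (κ y : ℝ) :
    weibullPdf lam κ (exp y) =
      κ / lam * exp ((κ - 1) * (y - log lam)) * exp (-exp (κ * (y - log lam))) := by
  have hdiv : exp y / lam = exp (y - log lam) := by rw [exp_sub, exp_log hlam]
  rw [weibullPdf, hdiv, ← exp_mul, ← exp_mul, mul_comm _ (κ - 1), mul_comm _ κ]

lemma log_weibullPdf_exp {lam κ : ℝ} (hlam : 0 < lam) (hκ : 0 < κ) (y : ℝ) :
    log (weibullPdf lam κ (exp y)) =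
      log κ - κ * log lam + (κ - 1) * y - exp (-(κ * log lam)) * exp (κ * y) := by
  rw [weibullPdf_exp hlam κ y, log_mul (by positivity) (exp_ne_zero _),
    log_mul (by positivity) (exp_ne_zero _), log_div hκ.ne' hlam.ne', log_exp, log_exp,
    ← exp_add, show -(κ * log lam) + κ * y = κ * (y - log lam) by ring]
  ring

lemma log_lognormalPdf_div_weibullPdf_exp {μ τ lam κ : ℝ} (hτ : 0 < τ) (hlam : 0 < lam)
    (hκ : 0 < κ) (y : ℝ) :
    log (lognormalPdf μ τ (exp y) / weibullPdf lam κ (exp y)) =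
      ((1 / 2) * log (τ / (2 * π)) - log κ + κ * log lam) - κ * y - τ / 2 * (y - μ) ^ 2 +
        exp (-(κ * log lam)) * exp (κ * y) := by
  have hf : 0 < lognormalPdf μ τ (exp y) := by
    rw [lognormalPdf]; have := sqrt_pos.2 (show 0 < τ / (2 * π) by positivity); positivity
  have hg : 0 < weibullPdf lam κ (exp y) := by rw [weibullPdf_exp hlam κ y]; positivity
  rw [log_div hf.ne' hg.ne', log_lognormalPdf_exp hτ, log_weibullPdf_exp hlam hκ]
  ring

lemma klDivPos_lognormalPdf_weibullPdf {μ τ lam κ : ℝ} (hτ : 0 < τ) (hlam : 0 < lam)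
    (hκ : 0 < κ) :
    klDivPos (lognormalPdf μ τ) (weibullPdf lam κ) =
      (1 / 2) * log (τ / (2 * π)) - log κ + κ * (log lam - μ) - 1 / 2 +
        exp (κ ^ 2 / (2 * τ) - κ * (log lam - μ)) := by
  have hv : (τ⁻¹).toNNReal ≠ 0 := (Real.toNNReal_pos.2 (inv_pos.2 hτ)).ne'
  rw [klDivPos, setIntegral_Ioi_zero_eq_integral_exp_mul]
  simp_rw [← mul_assoc, exp_mul_lognormalPdf_exp hτ,
    log_lognormalPdf_div_weibullPdf_exp hτ hlam hκ, ← smul_eq_mul (gaussianPDFReal _ _ _)]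
  rw [← integral_gaussianReal_eq_integral_smul hv, integral_sub_sub_add_exp_gaussianReal,
    Real.coe_toNNReal _ (inv_nonneg.2 hτ.le), ← exp_add,
    show -(κ * log lam) + (μ * κ + τ⁻¹ * κ ^ 2 / 2) = κ ^ 2 / (2 * τ) - κ * (log lam - μ) by ring,
    show τ / 2 * τ⁻¹ = 1 / 2 by field_simp]
  ring

lemma one_sub_half_log_two_pi_le {τ κ : ℝ} (hτ : 0 < τ) (hκ : 0 < κ) (s : ℝ) :
    1 - (1 / 2) * log (2 * π) ≤
      (1 / 2) * log (τ / (2 * π)) - log κ + s - 1 / 2 + exp (κ ^ 2 / (2 * τ) - s) := by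
  have hexp := add_one_le_exp (κ ^ 2 / (2 * τ) - s)
  have hlog := log_le_sub_one_of_pos (show 0 < κ ^ 2 / τ by positivity)
  rw [log_div (by positivity) hτ.ne', log_pow] at hlog
  rw [log_div hτ.ne' (by positivity)]
  have : κ ^ 2 / (2 * τ) = κ ^ 2 / τ / 2 := by ring
  push_cast at hlog
  linarith

/-- for every `μ ∈ ℝ` and `τ > 0`, the infimum over `(λ, κ) ∈ (0, ∞)²` of
`D_KL(lognormal(μ, τ) ‖ Weibull(λ, κ))` equals `1 − (1/2) log(2π)` (hence does not depend
on `(μ, τ)`), and it is attained at `κ = √τ`, `λ = exp(μ + 1/(2√τ))`. -/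
theorem inf_kl_lognormal_weibull (μ τ : ℝ) (hτ : 0 < τ) :
    sInf {d : ℝ | ∃ lam κ : ℝ, 0 < lam ∧ 0 < κ ∧
          d = klDivPos (lognormalPdf μ τ) (weibullPdf lam κ)} =
        1 - (1 / 2) * Real.log (2 * Real.pi) ∧
      klDivPos (lognormalPdf μ τ)
          (weibullPdf (Real.exp (μ + 1 / (2 * Real.sqrt τ))) (Real.sqrt τ)) =
        1 - (1 / 2) * Real.log (2 * Real.pi) := by
  have hsτ : 0 < √τ := sqrt_pos.2 hτ
  have hmin : klDivPos (lognormalPdf μ τ) (weibullPdf (exp (μ + 1 / (2 * √τ))) √τ) =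
      1 - (1 / 2) * log (2 * π) := by
    have hs : √τ * (log (exp (μ + 1 / (2 * √τ))) - μ) = 1 / 2 := by
      rw [log_exp]; field_simp; ring
    have hq : √τ ^ 2 / (2 * τ) - 1 / 2 = 0 := by
      rw [sq_sqrt hτ.le]; field_simp; ring
    rw [klDivPos_lognormalPdf_weibullPdf hτ (exp_pos _) hsτ, hs, hq, exp_zero, log_sqrt hτ.le,
      log_div hτ.ne' (by positivity)]
    ring
  refine ⟨IsLeast.csInf_eq ⟨⟨_, _, exp_pos _, hsτ, hmin.symm⟩, ?_⟩, hmin⟩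
  rintro d ⟨lam, κ, hlam, hκ, rfl⟩
  rw [klDivPos_lognormalPdf_weibullPdf hτ hlam hκ]
  exact one_sub_half_log_two_pi_le hτ hκ _
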